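/- arXiv:0712.1296 — 2 statements merged into one kernel-verified Lean document; each statement's English description precedes it below -/
import Mathlib

section
/- Let K, a, b : ℝ × ℝ → ℝ be smooth functions of (θ, t) such that for every θ: ∂²a/∂t² + K·a = 0 and ∂²b/∂t² + K·b = 0, with a(θ,0) = 1, ∂a/∂t(θ,0) = 0, b(θ,0) = 0, ∂b/∂t(θ,0) = 1. Define φ := b·∂a/∂θ − a·∂b/∂θ. Then φ satisfies the third-order linear ordinary differential equation ∂³φ/∂t³ + 4·K·(∂φ/∂t) + 2·(∂K/∂t)·φ = −2·(∂K/∂θ) for all (θ,t). -/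
/-- Partial derivative in the second variable `t`. -/
noncomputable def partialT (f : ℝ × ℝ → ℝ) : ℝ × ℝ → ℝ :=
  fun p => deriv (fun s => f (p.1, s)) p.2

/-- Partial derivative in the first variable `θ`. -/
noncomputable def partialTheta (f : ℝ × ℝ → ℝ) : ℝ × ℝ → ℝ :=
  fun p => deriv (fun u => f (u, p.2)) p.1

lemma sectT_contDiff {f : ℝ × ℝ → ℝ} (hf : ContDiff ℝ (⊤ : ℕ∞) f) (x : ℝ) :
    ContDiff ℝ (⊤ : ℕ∞) (fun s : ℝ => f (x, s)) :=
  hf.comp (contDiff_const.prodMk contDiff_id)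

lemma sectTheta_contDiff {f : ℝ × ℝ → ℝ} (hf : ContDiff ℝ (⊤ : ℕ∞) f) (t : ℝ) :
    ContDiff ℝ (⊤ : ℕ∞) (fun u : ℝ => f (u, t)) :=
  hf.comp (contDiff_id.prodMk contDiff_const)

lemma hasDerivAt_sectT {f : ℝ × ℝ → ℝ} (hf : Differentiable ℝ f) (p : ℝ × ℝ) :
    HasDerivAt (fun s : ℝ => f (p.1, s)) (fderiv ℝ f p (0, 1)) p.2 := by
  have h1 : HasDerivAt (fun s : ℝ => ((p.1 : ℝ), s)) ((0 : ℝ), (1 : ℝ)) p.2 :=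
    (hasDerivAt_const _ _).prodMk (hasDerivAt_id _)
  exact (hf p).hasFDerivAt.comp_hasDerivAt p.2 h1

lemma hasDerivAt_sectTheta {f : ℝ × ℝ → ℝ} (hf : Differentiable ℝ f) (p : ℝ × ℝ) :
    HasDerivAt (fun u : ℝ => f (u, p.2)) (fderiv ℝ f p (1, 0)) p.1 := by
  have h1 : HasDerivAt (fun u : ℝ => ((u : ℝ), p.2)) ((1 : ℝ), (0 : ℝ)) p.1 :=
    (hasDerivAt_id _).prodMk (hasDerivAt_const _ _)
  exact (hf p).hasFDerivAt.comp_hasDerivAt p.1 h1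

lemma partialT_eq_fderiv {f : ℝ × ℝ → ℝ} (hf : Differentiable ℝ f) (p : ℝ × ℝ) :
    partialT f p = fderiv ℝ f p (0, 1) :=
  (hasDerivAt_sectT hf p).deriv

lemma partialTheta_eq_fderiv {f : ℝ × ℝ → ℝ} (hf : Differentiable ℝ f) (p : ℝ × ℝ) :
    partialTheta f p = fderiv ℝ f p (1, 0) :=
  (hasDerivAt_sectTheta hf p).deriv

lemma partialT_contDiff {f : ℝ × ℝ → ℝ} (hf : ContDiff ℝ (⊤ : ℕ∞) f) :
    ContDiff ℝ (⊤ : ℕ∞) (partialT f) := by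
  have h : partialT f = fun p => fderiv ℝ f p (0, 1) :=
    funext fun p => partialT_eq_fderiv (hf.differentiable (by simp)) p
  rw [h]
  exact (hf.fderiv_right (by simp)).clm_apply contDiff_const

lemma partialTheta_contDiff {f : ℝ × ℝ → ℝ} (hf : ContDiff ℝ (⊤ : ℕ∞) f) :
    ContDiff ℝ (⊤ : ℕ∞) (partialTheta f) := by
  have h : partialTheta f = fun p => fderiv ℝ f p (1, 0) :=
    funext fun p => partialTheta_eq_fderiv (hf.differentiable (by simp)) p
  rw [h]
  exact (hf.fderiv_right (by simp)).clm_apply contDiff_const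

lemma clairaut {f : ℝ × ℝ → ℝ} (hf : ContDiff ℝ (⊤ : ℕ∞) f) (p : ℝ × ℝ) :
    partialT (partialTheta f) p = partialTheta (partialT f) p := by
  have hdf : Differentiable ℝ f := hf.differentiable (by simp)
  have hf' : ContDiff ℝ (⊤ : ℕ∞) (fderiv ℝ f) := hf.fderiv_right (by simp)
  have hdf' : Differentiable ℝ (fderiv ℝ f) := hf'.differentiable (by simp)
  have hθ : partialTheta f = fun q => fderiv ℝ f q (1, 0) :=
    funext fun q => partialTheta_eq_fderiv hdf q
  have hT : partialT f = fun q => fderiv ℝ f q (0, 1) :=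
    funext fun q => partialT_eq_fderiv hdf q
  have hdθ : Differentiable ℝ (partialTheta f) := by
    rw [hθ]; exact (hf'.clm_apply contDiff_const).differentiable (by simp)
  have hdT : Differentiable ℝ (partialT f) := by
    rw [hT]; exact (hf'.clm_apply contDiff_const).differentiable (by simp)
  have hsym := second_derivative_symmetric (f := f) (f' := fderiv ℝ f)
    (f'' := fderiv ℝ (fderiv ℝ f) p) (fun y => (hdf y).hasFDerivAt) (hdf' p).hasFDerivAt
  rw [partialT_eq_fderiv hdθ, partialTheta_eq_fderiv hdT, hθ, hT,
    fderiv_clm_apply (hdf' p) (differentiableAt_const _),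
    fderiv_clm_apply (hdf' p) (differentiableAt_const _)]
  simp [hsym (0, 1) (1, 0)]

lemma partialT_mul {f g : ℝ × ℝ → ℝ} (hf : ContDiff ℝ (⊤ : ℕ∞) f) (hg : ContDiff ℝ (⊤ : ℕ∞) g) (p : ℝ × ℝ) :
    partialT (fun q => f q * g q) p = partialT f p * g p + f p * partialT g p := by
  have hf' : DifferentiableAt ℝ (fun s => f (p.1, s)) p.2 :=
    ((sectT_contDiff hf p.1).differentiable (by simp)).differentiableAt
  have hg' : DifferentiableAt ℝ (fun s => g (p.1, s)) p.2 :=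
    ((sectT_contDiff hg p.1).differentiable (by simp)).differentiableAt
  simpa [partialT] using deriv_fun_mul hf' hg'

lemma partialT_add {f g : ℝ × ℝ → ℝ} (hf : ContDiff ℝ (⊤ : ℕ∞) f) (hg : ContDiff ℝ (⊤ : ℕ∞) g) (p : ℝ × ℝ) :
    partialT (fun q => f q + g q) p = partialT f p + partialT g p := by
  have hf' : DifferentiableAt ℝ (fun s => f (p.1, s)) p.2 :=
    ((sectT_contDiff hf p.1).differentiable (by simp)).differentiableAt
  have hg' : DifferentiableAt ℝ (fun s => g (p.1, s)) p.2 :=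
    ((sectT_contDiff hg p.1).differentiable (by simp)).differentiableAt
  simpa [partialT] using deriv_fun_add hf' hg'

lemma partialT_sub {f g : ℝ × ℝ → ℝ} (hf : ContDiff ℝ (⊤ : ℕ∞) f) (hg : ContDiff ℝ (⊤ : ℕ∞) g) (p : ℝ × ℝ) :
    partialT (fun q => f q - g q) p = partialT f p - partialT g p := by
  have hf' : DifferentiableAt ℝ (fun s => f (p.1, s)) p.2 :=
    ((sectT_contDiff hf p.1).differentiable (by simp)).differentiableAt
  have hg' : DifferentiableAt ℝ (fun s => g (p.1, s)) p.2 :=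
    ((sectT_contDiff hg p.1).differentiable (by simp)).differentiableAt
  simpa [partialT] using deriv_fun_sub hf' hg'

lemma partialT_const_mul (c : ℝ) {g : ℝ × ℝ → ℝ} (hg : ContDiff ℝ (⊤ : ℕ∞) g) (p : ℝ × ℝ) :
    partialT (fun q => c * g q) p = c * partialT g p := by
  have hg' : DifferentiableAt ℝ (fun s => g (p.1, s)) p.2 :=
    ((sectT_contDiff hg p.1).differentiable (by simp)).differentiableAt
  simpa [partialT] using deriv_const_mul c hg'

lemma partialTheta_mul {f g : ℝ × ℝ → ℝ} (hf : ContDiff ℝ (⊤ : ℕ∞) f) (hg : ContDiff ℝ (⊤ : ℕ∞) g) (p : ℝ × ℝ) :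
    partialTheta (fun q => f q * g q) p = partialTheta f p * g p + f p * partialTheta g p := by
  have hf' : DifferentiableAt ℝ (fun u => f (u, p.2)) p.1 :=
    ((sectTheta_contDiff hf p.2).differentiable (by simp)).differentiableAt
  have hg' : DifferentiableAt ℝ (fun u => g (u, p.2)) p.1 :=
    ((sectTheta_contDiff hg p.2).differentiable (by simp)).differentiableAt
  simpa [partialTheta] using deriv_fun_mul hf' hg'


lemma partialTheta_neg_mul {f g : ℝ × ℝ → ℝ} (hf : ContDiff ℝ (⊤ : ℕ∞) f) (hg : ContDiff ℝ (⊤ : ℕ∞) g)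
    (p : ℝ × ℝ) :
    partialTheta (fun q => -(f q * g q)) p
      = -(partialTheta f p * g p + f p * partialTheta g p) := by
  have h : partialTheta (fun q => -(f q * g q)) p
      = -partialTheta (fun q => f q * g q) p := by
    have := deriv.neg (f := fun u => f (u, p.2) * g (u, p.2)) (x := p.1)
    simpa [partialTheta] using this
  rw [h, partialTheta_mul hf hg p]

lemma wronskian_one {K a b : ℝ × ℝ → ℝ}
    (hK : ContDiff ℝ (⊤ : ℕ∞) K) (ha : ContDiff ℝ (⊤ : ℕ∞) a) (hb : ContDiff ℝ (⊤ : ℕ∞) b)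
    (hJa : ∀ p : ℝ × ℝ, partialT (partialT a) p + K p * a p = 0)
    (hJb : ∀ p : ℝ × ℝ, partialT (partialT b) p + K p * b p = 0)
    (ha0 : ∀ θ : ℝ, a (θ, 0) = 1) (ha0' : ∀ θ : ℝ, partialT a (θ, 0) = 0)
    (hb0 : ∀ θ : ℝ, b (θ, 0) = 0) (hb0' : ∀ θ : ℝ, partialT b (θ, 0) = 1) :
    ∀ p : ℝ × ℝ, a p * partialT b p - b p * partialT a p = 1 := by
  have haT := partialT_contDiff ha
  have hbT := partialT_contDiff hb
  have hW : ContDiff ℝ (⊤ : ℕ∞) (fun q : ℝ × ℝ => a q * partialT b q - b q * partialT a q) :=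
    (ha.mul hbT).sub (hb.mul haT)
  have hWT : ∀ q : ℝ × ℝ,
      partialT (fun q => a q * partialT b q - b q * partialT a q) q = 0 := by
    intro q
    rw [partialT_sub (ha.mul hbT) (hb.mul haT) q, partialT_mul ha hbT q, partialT_mul hb haT q]
    have h1 := hJa q; have h2 := hJb q
    linear_combination a q * h2 - b q * h1
  intro p
  have key : ∀ s : ℝ,
      deriv (fun s' => a (p.1, s') * partialT b (p.1, s')
        - b (p.1, s') * partialT a (p.1, s')) s = 0 := fun s => hWT (p.1, s)
  have hdw : Differentiable ℝ (fun s' => a (p.1, s') * partialT b (p.1, s')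
      - b (p.1, s') * partialT a (p.1, s')) :=
    (sectT_contDiff hW p.1).differentiable (by simp)
  have hconst := is_const_of_deriv_eq_zero hdw key p.2 0
  rw [ha0, ha0', hb0, hb0'] at hconst
  simpa using hconst

/-- Paper's Lemma 2.1 (the ODE): for smooth families `a, b` of solutions of the
scalar Jacobi equation `∂²y/∂t² + K·y = 0` with initial data
`a(θ,0)=1, ∂ₜa(θ,0)=0, b(θ,0)=0, ∂ₜb(θ,0)=1`, the function
`φ = b·∂_θ a − a·∂_θ b` satisfies
`∂³φ/∂t³ + 4·K·∂φ/∂t + 2·(∂K/∂t)·φ = −2·∂K/∂θ`. -/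
theorem phi_third_order_ode
    (K a b : ℝ × ℝ → ℝ)
    (hK : ContDiff ℝ (⊤ : ℕ∞) K) (ha : ContDiff ℝ (⊤ : ℕ∞) a) (hb : ContDiff ℝ (⊤ : ℕ∞) b)
    (hJa : ∀ p : ℝ × ℝ, partialT (partialT a) p + K p * a p = 0)
    (hJb : ∀ p : ℝ × ℝ, partialT (partialT b) p + K p * b p = 0)
    (ha0 : ∀ θ : ℝ, a (θ, 0) = 1) (ha0' : ∀ θ : ℝ, partialT a (θ, 0) = 0)
    (hb0 : ∀ θ : ℝ, b (θ, 0) = 0) (hb0' : ∀ θ : ℝ, partialT b (θ, 0) = 1)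
    (φ : ℝ × ℝ → ℝ)
    (hφ : φ = fun p => b p * partialTheta a p - a p * partialTheta b p) :
    ∀ p : ℝ × ℝ,
      partialT (partialT (partialT φ)) p
        + 4 * K p * partialT φ p + 2 * partialT K p * φ p
        = -2 * partialTheta K p := by
  intro p
  have haθ : ContDiff ℝ (⊤ : ℕ∞) (partialTheta a) := partialTheta_contDiff ha
  have hbθ : ContDiff ℝ (⊤ : ℕ∞) (partialTheta b) := partialTheta_contDiff hb
  have haT : ContDiff ℝ (⊤ : ℕ∞) (partialT a) := partialT_contDiff ha
  have hbT : ContDiff ℝ (⊤ : ℕ∞) (partialT b) := partialT_contDiff hb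
  have haTθ : ContDiff ℝ (⊤ : ℕ∞) (partialTheta (partialT a)) := partialTheta_contDiff haT
  have hbTθ : ContDiff ℝ (⊤ : ℕ∞) (partialTheta (partialT b)) := partialTheta_contDiff hbT
  have swa : partialT (partialTheta a) = partialTheta (partialT a) := funext (clairaut ha)
  have swb : partialT (partialTheta b) = partialTheta (partialT b) := funext (clairaut hb)
  have swaT : partialT (partialTheta (partialT a)) = partialTheta (partialT (partialT a)) :=
    funext (clairaut haT)
  have swbT : partialT (partialTheta (partialT b)) = partialTheta (partialT (partialT b)) :=
    funext (clairaut hbT)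
  have hATT : partialT (partialT a) = fun q => -(K q * a q) :=
    funext fun q => by have := hJa q; linarith
  have hBTT : partialT (partialT b) = fun q => -(K q * b q) :=
    funext fun q => by have := hJb q; linarith
  have hATθT : ∀ q : ℝ × ℝ, partialT (partialTheta (partialT a)) q
      = -(partialTheta K q * a q + K q * partialTheta a q) := by
    intro q
    rw [swaT, hATT]
    exact partialTheta_neg_mul hK ha q
  have hBTθT : ∀ q : ℝ × ℝ, partialT (partialTheta (partialT b)) q
      = -(partialTheta K q * b q + K q * partialTheta b q) := by
    intro q
    rw [swbT, hBTT]
    exact partialTheta_neg_mul hK hb q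
  have hφt : ContDiff ℝ (⊤ : ℕ∞) (fun q : ℝ × ℝ => b q * partialTheta a q - a q * partialTheta b q) :=
    (hb.mul haθ).sub (ha.mul hbθ)
  have hψ : ContDiff ℝ (⊤ : ℕ∞) (fun q : ℝ × ℝ =>
      partialT b q * partialTheta (partialT a) q
        - partialT a q * partialTheta (partialT b) q) :=
    (hbT.mul haTθ).sub (haT.mul hbTθ)
  -- first t-derivative of φ
  have h1 : partialT φ = fun q =>
      partialT b q * partialTheta a q + b q * partialTheta (partialT a) q
        - (partialT a q * partialTheta b q + a q * partialTheta (partialT b) q) := by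
    funext q
    rw [hφ, partialT_sub (hb.mul haθ) (ha.mul hbθ) q, partialT_mul hb haθ q,
      partialT_mul ha hbθ q, swa, swb]
  -- second t-derivative of φ
  have h2 : partialT (partialT φ) = fun q =>
      (-2 : ℝ) * (K q * (b q * partialTheta a q - a q * partialTheta b q))
        + 2 * (partialT b q * partialTheta (partialT a) q
            - partialT a q * partialTheta (partialT b) q) := by
    funext q
    rw [h1, partialT_sub ((hbT.mul haθ).add (hb.mul haTθ)) ((haT.mul hbθ).add (ha.mul hbTθ)) q,
      partialT_add (hbT.mul haθ) (hb.mul haTθ) q,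
      partialT_add (haT.mul hbθ) (ha.mul hbTθ) q,
      partialT_mul hbT haθ q, partialT_mul hb haTθ q,
      partialT_mul haT hbθ q, partialT_mul ha hbTθ q,
      swa, swb, hATθT q, hBTθT q]
    have e1 : partialT (partialT b) q = -(K q * b q) := congrFun hBTT q
    have e2 : partialT (partialT a) q = -(K q * a q) := congrFun hATT q
    rw [e1, e2]
    ring
  -- pieces of the third t-derivative
  have hA : ContDiff ℝ (⊤ : ℕ∞) (fun q : ℝ × ℝ =>
      (-2 : ℝ) * (K q * (b q * partialTheta a q - a q * partialTheta b q))) :=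
    contDiff_const.mul (hK.mul hφt)
  have hB : ContDiff ℝ (⊤ : ℕ∞) (fun q : ℝ × ℝ =>
      (2 : ℝ) * (partialT b q * partialTheta (partialT a) q
        - partialT a q * partialTheta (partialT b) q)) :=
    contDiff_const.mul hψ
  have s1 : partialT (fun q =>
      (-2 : ℝ) * (K q * (b q * partialTheta a q - a q * partialTheta b q))
        + 2 * (partialT b q * partialTheta (partialT a) q
            - partialT a q * partialTheta (partialT b) q)) p
      = partialT (fun q =>
          (-2 : ℝ) * (K q * (b q * partialTheta a q - a q * partialTheta b q))) p
        + partialT (fun q =>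
          (2 : ℝ) * (partialT b q * partialTheta (partialT a) q
            - partialT a q * partialTheta (partialT b) q)) p :=
    partialT_add hA hB p
  have s2 : partialT (fun q =>
      (-2 : ℝ) * (K q * (b q * partialTheta a q - a q * partialTheta b q))) p
      = (-2 : ℝ) * partialT (fun q =>
          K q * (b q * partialTheta a q - a q * partialTheta b q)) p :=
    partialT_const_mul (-2) (hK.mul hφt) p
  have s3 : partialT (fun q =>
      (2 : ℝ) * (partialT b q * partialTheta (partialT a) q
        - partialT a q * partialTheta (partialT b) q)) p
      = (2 : ℝ) * partialT (fun q =>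
          partialT b q * partialTheta (partialT a) q
            - partialT a q * partialTheta (partialT b) q) p :=
    partialT_const_mul 2 hψ p
  have s4 : partialT (fun q =>
      K q * (b q * partialTheta a q - a q * partialTheta b q)) p
      = partialT K p * (b p * partialTheta a p - a p * partialTheta b p)
        + K p * partialT (fun q =>
            b q * partialTheta a q - a q * partialTheta b q) p :=
    partialT_mul hK hφt p
  have s5 : partialT (fun q : ℝ × ℝ =>
      b q * partialTheta a q - a q * partialTheta b q) p
      = partialT b p * partialTheta a p + b p * partialTheta (partialT a) p
        - (partialT a p * partialTheta b p + a p * partialTheta (partialT b) p) := by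
    rw [← hφ]; exact congrFun h1 p
  have s6 : partialT (fun q : ℝ × ℝ =>
      partialT b q * partialTheta (partialT a) q
        - partialT a q * partialTheta (partialT b) q) p
      = (-(K p * b p)) * partialTheta (partialT a) p
          + partialT b p * (-(partialTheta K p * a p + K p * partialTheta a p))
        - ((-(K p * a p)) * partialTheta (partialT b) p
          + partialT a p * (-(partialTheta K p * b p + K p * partialTheta b p))) := by
    rw [partialT_sub (hbT.mul haTθ) (haT.mul hbTθ) p,
      partialT_mul hbT haTθ p, partialT_mul haT hbTθ p, hATθT p, hBTθT p]
    have e1 : partialT (partialT b) p = -(K p * b p) := congrFun hBTT p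
    have e2 : partialT (partialT a) p = -(K p * a p) := congrFun hATT p
    rw [e1, e2]
  have s7 : partialT φ p
      = partialT b p * partialTheta a p + b p * partialTheta (partialT a) p
        - (partialT a p * partialTheta b p + a p * partialTheta (partialT b) p) :=
    congrFun h1 p
  have s8 : φ p = b p * partialTheta a p - a p * partialTheta b p := by rw [hφ]
  have hW1 : a p * partialT b p - b p * partialT a p = 1 :=
    wronskian_one hK ha hb hJa hJb ha0 ha0' hb0 hb0' p
  rw [h2, s1, s2, s3, s4, s5, s6, s7, s8]
  linear_combination (-2 : ℝ) * partialTheta K p * hW1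
end

section
/- Let T > 0, κ ≥ 0, M ≥ 0. Let K : [0,T] → ℝ be continuously differentiable with |K(t)| ≤ κ and |K'(t)| ≤ κ on [0,T], let g : [0,T] → ℝ be continuous with |g(t)| ≤ M on [0,T], and let φ : [0,T] → ℝ be three times continuously differentiable satisfying φ''' + 4·K·φ' + 2·K'·φ = −2·g on [0,T] with φ(0) = φ'(0) = φ''(0) = 0. Then there exists a constant C > 0, depending only on T and κ (and not on M, g, or φ), such that |φ(t)| ≤ C·t³·M for all t ∈ [0,T]. -/
open Set

/-! The jet `Φ = (φ, φ', φ'')`, normed by the max of its components, vanishes at `0`, and the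
equation gives `‖Φ'‖ ≤ (1 + 6κ)‖Φ‖ + 2M`. Grönwall's inequality then bounds `‖Φ(t)‖`, hence
`|φ''(t)|`, by `2M e^{(1+6κ)T} t` on `[0, T]`, and integrating twice from the zero initial data
gives `|φ(t)| ≤ e^{(1+6κ)T} t³ M / 3`. -/

theorem gronwallBound_zero_le_mul_exp {K ε x : ℝ} (hK : 0 ≤ K) (hε : 0 ≤ ε) :
    gronwallBound 0 K ε x ≤ ε * x * Real.exp (K * x) := by
  rcases hK.eq_or_lt with rfl | hK
  · simp [gronwallBound_K0]
  simp only [gronwallBound_of_K_ne_0 hK.ne', zero_mul, zero_add]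
  have hexp : Real.exp (K * x) - 1 ≤ K * x * Real.exp (K * x) := by
    have h := mul_le_mul_of_nonneg_right (Real.one_sub_le_exp_neg (K * x)) (Real.exp_pos (K * x)).le
    rwa [← Real.exp_add, neg_add_cancel, Real.exp_zero, sub_mul, one_mul, sub_le_comm] at h
  calc ε / K * (Real.exp (K * x) - 1) ≤ ε / K * (K * x * Real.exp (K * x)) := by gcongr
    _ = ε * x * Real.exp (K * x) := by field_simp

section

variable {E : Type*} [NormedAddCommGroup E] [NormedSpace ℝ E] {f f' : ℝ → E} {T : ℝ}

theorem norm_le_mul_exp_of_norm_deriv_le {K ε : ℝ} (hK : 0 ≤ K) (hε : 0 ≤ ε)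
    (hf : ∀ t ∈ Icc 0 T, HasDerivAt f (f' t) t) (h0 : f 0 = 0)
    (bound : ∀ t ∈ Ico 0 T, ‖f' t‖ ≤ K * ‖f t‖ + ε) :
    ∀ t ∈ Icc 0 T, ‖f t‖ ≤ ε * Real.exp (K * T) * t := by
  intro t ht
  have hgronwall := norm_le_gronwallBound_of_norm_deriv_right_le (δ := 0)
    (fun s hs => (hf s hs).continuousAt.continuousWithinAt)
    (fun s hs => (hf s (Ico_subset_Icc_self hs)).hasDerivWithinAt) (by simp [h0]) bound t ht
  calc ‖f t‖ ≤ ε * t * Real.exp (K * t) := by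
        simpa using hgronwall.trans (gronwallBound_zero_le_mul_exp hK hε)
    _ ≤ ε * t * Real.exp (K * T) := by
        gcongr
        · exact mul_nonneg hε ht.1
        · exact ht.2
    _ = ε * Real.exp (K * T) * t := by ring

theorem norm_le_mul_pow_of_norm_deriv_le {c : ℝ} (n : ℕ)
    (hf : ∀ t ∈ Icc 0 T, HasDerivAt f (f' t) t) (h0 : f 0 = 0)
    (bound : ∀ t ∈ Icc 0 T, ‖f' t‖ ≤ c * t ^ n) :
    ∀ t ∈ Icc 0 T, ‖f t‖ ≤ c / (n + 1) * t ^ (n + 1) := by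
  have hB : ∀ t, HasDerivAt (fun s => c / (n + 1) * s ^ (n + 1)) (c * t ^ n) t := by
    intro t
    refine ((hasDerivAt_pow (n + 1) t).const_mul (c / (n + 1))).congr_deriv ?_
    rw [Nat.add_sub_cancel, Nat.cast_succ]
    field_simp
  exact image_norm_le_of_norm_deriv_right_le_deriv_boundary
    (fun s hs => (hf s hs).continuousAt.continuousWithinAt)
    (fun s hs => (hf s (Ico_subset_Icc_self hs)).hasDerivWithinAt) (by simp [h0]) hB
    (fun s hs => bound s (Ico_subset_Icc_self hs))

end

theorem norm_le_of_third_order_eq {a b c d K K' g κ M : ℝ} (hK : |K| ≤ κ) (hK' : |K'| ≤ κ)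
    (hg : |g| ≤ M) (h : d + 4 * K * b + 2 * K' * a = -2 * g) :
    ‖(b, c, d)‖ ≤ (1 + 6 * κ) * ‖(a, b, c)‖ + 2 * M := by
  set r := ‖(a, b, c)‖
  have hr : 0 ≤ r := norm_nonneg _
  have hκ : 0 ≤ κ := (abs_nonneg K).trans hK
  have ha : |a| ≤ r := norm_fst_le (a, b, c)
  have hb : |b| ≤ r := (norm_fst_le (b, c)).trans (norm_snd_le (a, b, c))
  have hc : |c| ≤ r := (norm_snd_le (b, c)).trans (norm_snd_le (a, b, c))
  have hKb : |K * b| ≤ κ * r := by rw [abs_mul]; exact mul_le_mul hK hb (abs_nonneg b) hκ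
  have hKa : |K' * a| ≤ κ * r := by rw [abs_mul]; exact mul_le_mul hK' ha (abs_nonneg a) hκ
  have hd : |d| ≤ 6 * κ * r + 2 * M := by
    rw [abs_le] at hg hKb hKa ⊢
    constructor <;> linarith
  have hM : 0 ≤ M := (abs_nonneg g).trans hg
  rw [norm_prod_le_iff, norm_prod_le_iff]
  exact ⟨hb.trans (by nlinarith), hc.trans (by nlinarith), hd.trans (by linarith)⟩

theorem phi_cubic_bound_of_third_order_ode_general
    (T κ : ℝ) (hκ : 0 ≤ κ) :
    ∃ C : ℝ, 0 < C ∧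
      ∀ (M : ℝ), 0 ≤ M →
      ∀ (K g φ : ℝ → ℝ),
        ContDiff ℝ 1 K →
        (∀ t ∈ Icc (0 : ℝ) T, |K t| ≤ κ) →
        (∀ t ∈ Icc (0 : ℝ) T, |deriv K t| ≤ κ) →
        ContinuousOn g (Icc 0 T) →
        (∀ t ∈ Icc (0 : ℝ) T, |g t| ≤ M) →
        ContDiff ℝ 3 φ →
        (∀ t ∈ Icc (0 : ℝ) T,
          deriv (deriv (deriv φ)) t + 4 * K t * deriv φ t + 2 * deriv K t * φ t
            = -2 * g t) →
        φ 0 = 0 → deriv φ 0 = 0 → deriv (deriv φ) 0 = 0 →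
        ∀ t ∈ Icc (0 : ℝ) T, |φ t| ≤ C * t ^ 3 * M := by
  refine ⟨Real.exp ((1 + 6 * κ) * T) / 3, by positivity, ?_⟩
  intro M hM K g φ _ hK hK' _ hg hφ hode h0 h1 h2
  have hd0 : Differentiable ℝ φ := hφ.differentiable (by norm_num)
  have hd1 : Differentiable ℝ (deriv φ) := (hφ.iterate_deriv' 2 1).differentiable (by norm_num)
  have hd2 : Differentiable ℝ (deriv (deriv φ)) :=
    (hφ.iterate_deriv' 1 2).differentiable (by norm_num)
  have hjet := norm_le_mul_exp_of_norm_deriv_le (by positivity) (by positivity)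
    (f := fun t => (φ t, deriv φ t, deriv (deriv φ) t))
    (fun t _ => (hd0 t).hasDerivAt.prodMk ((hd1 t).hasDerivAt.prodMk (hd2 t).hasDerivAt))
    (by simp [h0, h1, h2])
    (fun t ht =>
      have ht := Ico_subset_Icc_self ht
      norm_le_of_third_order_eq (hK t ht) (hK' t ht) (hg t ht) (hode t ht))
  have hφ'' := fun t ht => (norm_snd_le _).trans ((norm_snd_le _).trans (hjet t ht))
  have hφ' := norm_le_mul_pow_of_norm_deriv_le 1 (fun t _ => (hd1 t).hasDerivAt) h1
    (by simpa using hφ'')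
  have hφ := norm_le_mul_pow_of_norm_deriv_le 2 (fun t _ => (hd0 t).hasDerivAt) h0 hφ'
  intro t ht
  calc |φ t| ≤ _ := hφ t ht
    _ = _ := by push_cast; ring

/-- Cubic bound on the solution, with triple zero initial data, of the third-order linear
ODE `φ''' + 4Kφ' + 2K'φ = −2g`: there is a constant `C > 0` depending only on `T` and
`κ` such that `|φ(t)| ≤ C·t³·M` on `[0,T]`. -/
theorem phi_cubic_bound_of_third_order_ode
    (T κ : ℝ) (hT : 0 < T) (hκ : 0 ≤ κ) :
    ∃ C : ℝ, 0 < C ∧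
      ∀ (M : ℝ), 0 ≤ M →
      ∀ (K g φ : ℝ → ℝ),
        ContDiff ℝ 1 K →
        (∀ t ∈ Icc (0 : ℝ) T, |K t| ≤ κ) →
        (∀ t ∈ Icc (0 : ℝ) T, |deriv K t| ≤ κ) →
        ContinuousOn g (Icc 0 T) →
        (∀ t ∈ Icc (0 : ℝ) T, |g t| ≤ M) →
        ContDiff ℝ 3 φ →
        (∀ t ∈ Icc (0 : ℝ) T,
          deriv (deriv (deriv φ)) t + 4 * K t * deriv φ t + 2 * deriv K t * φ t
            = -2 * g t) →
        φ 0 = 0 → deriv φ 0 = 0 → deriv (deriv φ) 0 = 0 →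
        ∀ t ∈ Icc (0 : ℝ) T, |φ t| ≤ C * t ^ 3 * M :=
  phi_cubic_bound_of_third_order_ode_general T κ hκ
end
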